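/- arXiv:2312.08180 — 2 statements merged into one kernel-verified Lean document; each statement's English description precedes it below -/
import Mathlib

section
/- There exist constants d₁ > 0, d₂ > 0 and γ > 0, depending only on Ω, σ, c and q, such that every solution of the Maxwell–Bloch system with one two-level molecule satisfying the charge constraint |C₁(t)|² + |C₂(t)|² = 1 obeys |A(t)|² + |B(t)|² ≤ d₁·(|A(0)|² + |B(0)|²)·e^{−γt} + d₂ for all t > 0. -/
/-- The molecular current `j(t) = 2q·Im(conj(C₁(t))·C₂(t))`. -/
noncomputable def mbCurrent (q : ℝ) (C₁ C₂ : ℝ → ℂ) (t : ℝ) : ℝ :=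
  2 * q * ((starRingEnd ℂ) (C₁ t) * C₂ t).im

/-- A solution of the Maxwell–Bloch system with one two-level molecule on `[0,∞)`:
`A' = B`, `B' = -Ω²A - σB + c·j`, `iℏC₁' = ℏω₁C₁ + i·a·C₂`, `iℏC₂' = ℏω₂C₂ - i·a·C₁`,
with `a(t) = (q/c)(A(t) + A_p(t))`. -/
structure IsMBSolution (Ω σ c hbar ω₁ ω₂ q : ℝ) (Ap A B : ℝ → ℝ)
    (C₁ C₂ : ℝ → ℂ) : Prop where
  hA : ∀ t ∈ Set.Ici (0 : ℝ), HasDerivAt A (B t) t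
  hB : ∀ t ∈ Set.Ici (0 : ℝ),
      HasDerivAt B (-Ω ^ 2 * A t - σ * B t + c * mbCurrent q C₁ C₂ t) t
  hC₁ : ∀ t ∈ Set.Ici (0 : ℝ), ∃ d : ℂ, HasDerivAt C₁ d t ∧
      Complex.I * (hbar : ℂ) * d =
        (hbar : ℂ) * (ω₁ : ℂ) * C₁ t
          + Complex.I * ((q / c * (A t + Ap t) : ℝ) : ℂ) * C₂ t
  hC₂ : ∀ t ∈ Set.Ici (0 : ℝ), ∃ d : ℂ, HasDerivAt C₂ d t ∧
      Complex.I * (hbar : ℂ) * d =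
        (hbar : ℂ) * (ω₂ : ℂ) * C₂ t
          - Complex.I * ((q / c * (A t + Ap t) : ℝ) : ℂ) * C₁ t


/-! Under the charge constraint the current is bounded, `|j| ≤ 2q‖C₁‖‖C₂‖ ≤ q`, so `(A, B)` is a
damped harmonic oscillator driven by a bounded force. For such an oscillator the tilted energy
`V = Ω²A² + B² + 2εAB` is, for small `ε > 0`, comparable to `A² + B²` and obeys
`V' ≤ -(ε/2) V + K`; Grönwall's inequality then gives `V(t) ≤ V(0) e^{-εt/2} + 2K/ε`. -/

open Real

theorem le_mul_exp_add_div_of_deriv_le {f f' : ℝ → ℝ} {γ K : ℝ} (hγ : 0 < γ) (hK : 0 ≤ K)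
    (hf : ∀ t ≥ 0, HasDerivAt f (f' t) t) (bound : ∀ t ≥ 0, f' t ≤ -γ * f t + K)
    {t : ℝ} (ht : 0 ≤ t) :
    f t ≤ f 0 * exp (-γ * t) + K / γ := by
  have hgron := le_gronwallBound_of_liminf_deriv_right_le (a := 0) (b := t)
    (fun x hx => (hf x hx.1).continuousAt.continuousWithinAt)
    (fun x hx _ hr => (hf x hx.1).hasDerivWithinAt.liminf_right_slope_le hr) le_rfl
    (fun x hx => bound x hx.1) t ⟨ht, le_rfl⟩
  rw [gronwallBound_of_K_ne_0 (neg_ne_zero.2 hγ.ne'), sub_zero] at hgron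
  calc f t ≤ f 0 * exp (-γ * t) + K / -γ * (exp (-γ * t) - 1) := hgron
    _ = f 0 * exp (-γ * t) + K / γ - K / γ * exp (-γ * t) := by ring
    _ ≤ f 0 * exp (-γ * t) + K / γ := by
      have : 0 ≤ K / γ * exp (-γ * t) := by positivity
      linarith

theorem abs_im_conj_mul_le (z w : ℂ) : |(starRingEnd ℂ z * w).im| ≤ (‖z‖ ^ 2 + ‖w‖ ^ 2) / 2 :=
  calc |(starRingEnd ℂ z * w).im| ≤ ‖starRingEnd ℂ z * w‖ := Complex.abs_im_le_norm _
    _ = ‖z‖ * ‖w‖ := by rw [norm_mul, Complex.norm_conj]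
    _ ≤ (‖z‖ ^ 2 + ‖w‖ ^ 2) / 2 := by nlinarith [sq_nonneg (‖z‖ - ‖w‖)]

theorem abs_mbCurrent_le {q : ℝ} (hq : 0 ≤ q) (C₁ C₂ : ℝ → ℂ) (t : ℝ) :
    |mbCurrent q C₁ C₂ t| ≤ q * (‖C₁ t‖ ^ 2 + ‖C₂ t‖ ^ 2) := by
  have := abs_im_conj_mul_le (C₁ t) (C₂ t)
  rw [mbCurrent, abs_mul, abs_of_nonneg (by positivity : 0 ≤ 2 * q)]
  nlinarith

def oscillatorLyapunov (Ω ε A B : ℝ) : ℝ := Ω ^ 2 * A ^ 2 + B ^ 2 + 2 * ε * A * B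

section Oscillator

variable {Ω σ ε : ℝ}

theorem abs_two_mul_mul_mul_le (hε : 0 ≤ ε) (hεΩ : 2 * ε ≤ Ω) (A B : ℝ) :
    |2 * ε * A * B| ≤ (Ω ^ 2 * A ^ 2 + B ^ 2) / 2 := by
  have hAB : 2 * ε * |A| * |B| ≤ Ω * |A| * |B| := by gcongr
  rw [abs_mul, abs_mul, abs_of_nonneg (by positivity : 0 ≤ 2 * ε)]
  nlinarith [sq_nonneg (Ω * |A| - |B|), sq_abs A, sq_abs B]

theorem sq_add_sq_le_two_mul_oscillatorLyapunov (hε : 0 ≤ ε) (hεΩ : 2 * ε ≤ Ω) (A B : ℝ) :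
    Ω ^ 2 * A ^ 2 + B ^ 2 ≤ 2 * oscillatorLyapunov Ω ε A B := by
  have := abs_two_mul_mul_mul_le hε hεΩ A B
  rw [oscillatorLyapunov]
  linarith [neg_abs_le (2 * ε * A * B)]

theorem oscillatorLyapunov_le (hε : 0 ≤ ε) (hεΩ : 2 * ε ≤ Ω) (A B : ℝ) :
    oscillatorLyapunov Ω ε A B ≤ 2 * (Ω ^ 2 * A ^ 2 + B ^ 2) := by
  have := abs_two_mul_mul_mul_le hε hεΩ A B
  rw [oscillatorLyapunov]
  nlinarith [le_abs_self (2 * ε * A * B), sq_nonneg (Ω * A), sq_nonneg B]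

theorem hasDerivAt_oscillatorLyapunov {A B : ℝ → ℝ} {a b t : ℝ}
    (hA : HasDerivAt A a t) (hB : HasDerivAt B b t) :
    HasDerivAt (fun s => oscillatorLyapunov Ω ε (A s) (B s))
      (2 * Ω ^ 2 * A t * a + 2 * B t * b + 2 * ε * (a * B t + A t * b)) t := by
  have := (((hA.fun_pow 2).const_mul (Ω ^ 2)).fun_add (hB.fun_pow 2)).fun_add
    ((hA.fun_mul hB).const_mul (2 * ε))
  have hV : (fun s => oscillatorLyapunov Ω ε (A s) (B s))
      = fun s => Ω ^ 2 * A s ^ 2 + B s ^ 2 + 2 * ε * (A s * B s) := by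
    funext s
    rw [oscillatorLyapunov]
    ring
  rw [hV]
  exact this.congr_deriv (by ring)

theorem two_mul_mul_le_of_sq_le {f F k : ℝ} (hk : 0 < k) (hf : f ^ 2 ≤ F ^ 2) (x : ℝ) :
    2 * f * x ≤ k * x ^ 2 / 2 + 2 * F ^ 2 / k := by
  have key : 0 ≤ ((k * x - 2 * f) ^ 2 + 4 * (F ^ 2 - f ^ 2)) / (2 * k) := by
    have := sub_nonneg.2 hf
    positivity
  have expand : ((k * x - 2 * f) ^ 2 + 4 * (F ^ 2 - f ^ 2)) / (2 * k)
      = k * x ^ 2 / 2 + 2 * F ^ 2 / k - 2 * f * x := by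
    field_simp
    ring
  linarith

theorem oscillatorLyapunov_deriv_le (hΩ : 0 < Ω) (hσ : 0 < σ) (hε : 0 < ε)
    (hεσ : 4 * ε * (Ω ^ 2 + σ ^ 2) ≤ σ * Ω ^ 2) {f F : ℝ} (hf : f ^ 2 ≤ F ^ 2) (A B : ℝ) :
    2 * Ω ^ 2 * A * B + 2 * B * (-Ω ^ 2 * A - σ * B + f)
        + 2 * ε * (B * B + A * (-Ω ^ 2 * A - σ * B + f))
      ≤ -ε * (Ω ^ 2 * A ^ 2 + B ^ 2) + 2 * F ^ 2 * (1 / σ + ε / Ω ^ 2) := by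
  have hΩ2 : 0 < Ω ^ 2 := by positivity
  have cross := mul_le_mul_of_nonneg_left
    (two_mul_mul_le_of_sq_le hΩ2 (le_refl ((-σ * B) ^ 2)) A) hε.le
  have forceA := mul_le_mul_of_nonneg_left (two_mul_mul_le_of_sq_le hΩ2 hf A) hε.le
  have forceB := two_mul_mul_le_of_sq_le hσ hf B
  have coeffB : (2 * ε + 2 * ε * σ ^ 2 / Ω ^ 2) * B ^ 2 ≤ σ / 2 * B ^ 2 := by
    gcongr
    rw [← sub_nonneg]
    have expand : σ / 2 - (2 * ε + 2 * ε * σ ^ 2 / Ω ^ 2)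
        = (σ * Ω ^ 2 - 4 * ε * (Ω ^ 2 + σ ^ 2)) / (2 * Ω ^ 2) := by
      field_simp
      ring
    rw [expand]
    have := sub_nonneg.2 hεσ
    positivity
  have hε_le_σ : ε ≤ σ := by nlinarith
  have dampB : ε * B ^ 2 ≤ σ * B ^ 2 := mul_le_mul_of_nonneg_right hε_le_σ (sq_nonneg B)
  linear_combination cross + forceB + forceA + coeffB + dampB

theorem sq_add_sq_le_one_add_inv_mul (hΩ : Ω ≠ 0) (A B : ℝ) :
    A ^ 2 + B ^ 2 ≤ (1 + (Ω ^ 2)⁻¹) * (Ω ^ 2 * A ^ 2 + B ^ 2) := by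
  have expand : (1 + (Ω ^ 2)⁻¹) * (Ω ^ 2 * A ^ 2 + B ^ 2)
      = A ^ 2 + B ^ 2 + (Ω ^ 2 * A ^ 2 + (Ω ^ 2)⁻¹ * B ^ 2) := by
    field_simp
    ring
  rw [expand]
  have : 0 ≤ Ω ^ 2 * A ^ 2 + (Ω ^ 2)⁻¹ * B ^ 2 := by positivity
  linarith

theorem mul_sq_add_sq_le (Ω A B : ℝ) :
    Ω ^ 2 * A ^ 2 + B ^ 2 ≤ (Ω ^ 2 + 1) * (A ^ 2 + B ^ 2) := by
  nlinarith [mul_nonneg (sq_nonneg Ω) (sq_nonneg B), sq_nonneg A]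

end Oscillator

theorem dampedOscillator_apriori_bound (Ω σ F : ℝ) (hΩ : 0 < Ω) (hσ : 0 < σ) (hF : 0 < F) :
    ∃ d₁ d₂ γ : ℝ, 0 < d₁ ∧ 0 < d₂ ∧ 0 < γ ∧
      ∀ A B f : ℝ → ℝ, (∀ t ≥ 0, HasDerivAt A (B t) t) →
        (∀ t ≥ 0, HasDerivAt B (-Ω ^ 2 * A t - σ * B t + f t) t) → (∀ t ≥ 0, |f t| ≤ F) →
        ∀ t ≥ 0, A t ^ 2 + B t ^ 2 ≤ d₁ * (A 0 ^ 2 + B 0 ^ 2) * exp (-γ * t) + d₂ := by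
  -- the largest `ε` allowed by `oscillatorLyapunov_deriv_le`; `Ω² + σ² ≥ 2Ωσ` then gives `8ε ≤ Ω`
  set ε := σ * Ω ^ 2 / (4 * (Ω ^ 2 + σ ^ 2))
  set K := 2 * F ^ 2 * (1 / σ + ε / Ω ^ 2)
  set κ := 1 + (Ω ^ 2)⁻¹
  have hε : 0 < ε := by positivity
  have hεσ : 4 * ε * (Ω ^ 2 + σ ^ 2) = σ * Ω ^ 2 := by
    simp only [ε]
    field_simp
  have hεΩ : 2 * ε ≤ Ω := by nlinarith [sq_nonneg (Ω - σ), mul_pos hσ hΩ]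
  refine ⟨4 * κ * (Ω ^ 2 + 1), 2 * κ * K / (ε / 2), ε / 2,
    by positivity, by positivity, by positivity, ?_⟩
  intro A B f hA hB hf t ht
  have decay : oscillatorLyapunov Ω ε (A t) (B t)
      ≤ oscillatorLyapunov Ω ε (A 0) (B 0) * exp (-(ε / 2) * t) + K / (ε / 2) := by
    refine le_mul_exp_add_div_of_deriv_le (half_pos hε) (by positivity)
      (fun s hs => hasDerivAt_oscillatorLyapunov (hA s hs) (hB s hs)) (fun s hs => ?_) ht
    have hf2 : f s ^ 2 ≤ F ^ 2 := sq_le_sq' (abs_le.mp (hf s hs)).1 (abs_le.mp (hf s hs)).2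
    have dissipation := oscillatorLyapunov_deriv_le hΩ hσ hε hεσ.le hf2 (A s) (B s)
    have comparable := oscillatorLyapunov_le hε.le hεΩ (A s) (B s)
    nlinarith
  have initial := (oscillatorLyapunov_le hε.le hεΩ (A 0) (B 0)).trans
    (mul_le_mul_of_nonneg_left (mul_sq_add_sq_le Ω (A 0) (B 0)) zero_le_two)
  calc A t ^ 2 + B t ^ 2 ≤ κ * (Ω ^ 2 * A t ^ 2 + B t ^ 2) :=
        sq_add_sq_le_one_add_inv_mul hΩ.ne' _ _
    _ ≤ κ * (2 * oscillatorLyapunov Ω ε (A t) (B t)) := by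
      gcongr
      exact sq_add_sq_le_two_mul_oscillatorLyapunov hε.le hεΩ _ _
    _ ≤ κ * (2 * (2 * ((Ω ^ 2 + 1) * (A 0 ^ 2 + B 0 ^ 2)) * exp (-(ε / 2) * t)
          + K / (ε / 2))) := by
      gcongr
      exact decay.trans (by gcongr)
    _ = _ := by ring

/-- A priori exponential bound for the Maxwell amplitudes, with constants
depending only on `Ω, σ, c, q`. -/
theorem mb_maxwell_apriori_bound
    (Ω σ c q : ℝ) (hΩ : 0 < Ω) (hσ : 0 < σ) (hc : 0 < c) (hq : 0 < q) :
    ∃ d₁ d₂ γ : ℝ, 0 < d₁ ∧ 0 < d₂ ∧ 0 < γ ∧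
      ∀ (hbar ω₁ ω₂ : ℝ) (Ap A B : ℝ → ℝ) (C₁ C₂ : ℝ → ℂ),
        0 < hbar → ω₁ < ω₂ → ContinuousOn Ap (Set.Ici 0) →
        IsMBSolution Ω σ c hbar ω₁ ω₂ q Ap A B C₁ C₂ →
        (∀ t ≥ (0 : ℝ), ‖C₁ t‖ ^ 2 + ‖C₂ t‖ ^ 2 = 1) →
        ∀ t > (0 : ℝ),
          A t ^ 2 + B t ^ 2 ≤ d₁ * (A 0 ^ 2 + B 0 ^ 2) * Real.exp (-γ * t) + d₂ := by
  obtain ⟨d₁, d₂, γ, hd₁, hd₂, hγ, bound⟩ :=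
    dampedOscillator_apriori_bound Ω σ (c * q) hΩ hσ (mul_pos hc hq)
  refine ⟨d₁, d₂, γ, hd₁, hd₂, hγ, fun hbar ω₁ ω₂ Ap A B C₁ C₂ _ _ _ sol hnorm t ht => ?_⟩
  refine bound A B (fun s => c * mbCurrent q C₁ C₂ s) sol.hA sol.hB (fun s hs => ?_) t ht.le
  calc |c * mbCurrent q C₁ C₂ s| = c * |mbCurrent q C₁ C₂ s| := by rw [abs_mul, abs_of_pos hc]
    _ ≤ c * (q * (‖C₁ s‖ ^ 2 + ‖C₂ s‖ ^ 2)) := by gcongr; exact abs_mbCurrent_le hq.le C₁ C₂ s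
    _ = c * q := by rw [hnorm s hs, mul_one]
end

section
/- Let the pumping A_p : [0,∞) → ℝ be continuous. Then for every initial state (A⁰, B⁰, C₁⁰, C₂⁰) ∈ ℝ² × ℂ² with |C₁⁰|² + |C₂⁰|² = 1, the Maxwell–Bloch system with one two-level molecule admits a unique global solution (A, B, C₁, C₂) on [0,∞) with (A(0), B(0), C₁(0), C₂(0)) = (A⁰, B⁰, C₁⁰, C₂⁰), and this solution satisfies |C₁(t)|² + |C₂(t)|² = 1 for all t ≥ 0. -/
open Set Filter Topology Complex
open scoped NNReal

section Lipschitz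

variable {X 𝕜 E : Type*} [PseudoMetricSpace X] [NormedField 𝕜] [SeminormedAddCommGroup E]
  [NormedSpace 𝕜 E]

theorem LipschitzWith.smul_of_norm_le {f : X → 𝕜} {g : X → E} {Kf Kg Mf Mg : ℝ≥0}
    (hf : LipschitzWith Kf f) (hg : LipschitzWith Kg g)
    (hfM : ∀ x, ‖f x‖ ≤ Mf) (hgM : ∀ x, ‖g x‖ ≤ Mg) :
    LipschitzWith (Kf * Mg + Mf * Kg) fun x => f x • g x := by
  refine LipschitzWith.of_dist_le_mul fun x y => ?_
  have hsplit : f x • g x - f y • g y = (f x - f y) • g x + f y • (g x - g y) := by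
    rw [sub_smul, smul_sub]; abel
  calc dist (f x • g x) (f y • g y) ≤ ‖f x - f y‖ * ‖g x‖ + ‖f y‖ * ‖g x - g y‖ := by
        rw [dist_eq_norm, hsplit]
        exact (norm_add_le _ _).trans (add_le_add (norm_smul_le _ _) (norm_smul_le _ _))
    _ ≤ (Kf * dist x y) * Mg + Mf * (Kg * dist x y) := by
        rw [← dist_eq_norm, ← dist_eq_norm]
        gcongr
        exacts [hf.dist_le_mul x y, hgM x, hfM y, hg.dist_le_mul x y]
    _ = ↑(Kf * Mg + Mf * Kg) * dist x y := by push_cast; ring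

end Lipschitz

section RadialRetraction

variable {E : Type*} [SeminormedAddCommGroup E] [NormedSpace ℝ E]

noncomputable def radialRetraction (x : E) : E := (max ‖x‖ 1)⁻¹ • x

theorem norm_radialRetraction_le_one (x : E) : ‖radialRetraction x‖ ≤ 1 := by
  rw [radialRetraction, norm_smul, Real.norm_of_nonneg (by positivity),
    inv_mul_le_iff₀ (by positivity), mul_one]
  exact le_max_left _ _

theorem radialRetraction_of_norm_le_one {x : E} (hx : ‖x‖ ≤ 1) : radialRetraction x = x := by
  simp [radialRetraction, max_eq_right hx]

theorem lipschitzWith_radialRetraction : LipschitzWith 2 (radialRetraction : E → E) := by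
  refine LipschitzWith.of_dist_le_mul fun x y => ?_
  set mx := max ‖x‖ 1
  set my := max ‖y‖ 1
  have hmx : 1 ≤ mx := le_max_right _ _
  have hmy : 1 ≤ my := le_max_right _ _
  have hm : |mx - my| ≤ dist x y :=
    (abs_max_sub_max_le_abs _ _ _).trans
      ((abs_norm_sub_norm_le x y).trans_eq (dist_eq_norm x y).symm)
  have hsplit : radialRetraction x - radialRetraction y = mx⁻¹ • (x - y) + (mx⁻¹ - my⁻¹) • y := by
    simp only [radialRetraction, smul_sub, sub_smul]; abel
  have hy : ‖y‖ ≤ my := le_max_left _ _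
  have hinv : |mx⁻¹ - my⁻¹| * ‖y‖ ≤ dist x y := by
    rw [inv_sub_inv (by positivity) (by positivity), abs_div,
      abs_of_pos (by positivity : 0 < mx * my), abs_sub_comm, div_mul_eq_mul_div,
      div_le_iff₀ (by positivity)]
    calc |mx - my| * ‖y‖ ≤ dist x y * my := by gcongr
      _ ≤ dist x y * (mx * my) := by gcongr; nlinarith
  calc dist (radialRetraction x) (radialRetraction y)
      ≤ mx⁻¹ * dist x y + |mx⁻¹ - my⁻¹| * ‖y‖ := by
        rw [dist_eq_norm, hsplit, dist_eq_norm]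
        refine (norm_add_le _ _).trans (add_le_add ?_ ?_)
        · rw [norm_smul, Real.norm_of_nonneg (by positivity)]
        · rw [norm_smul, Real.norm_eq_abs]
    _ ≤ 1 * dist x y + dist x y := by gcongr; exact inv_le_one_of_one_le₀ hmx
    _ = (2 : ℝ≥0) * dist x y := by push_cast; ring

end RadialRetraction

section ComponentDerivatives

variable {𝕜 E F : Type*} [NontriviallyNormedField 𝕜] [NormedAddCommGroup E] [NormedSpace 𝕜 E]
  [NormedAddCommGroup F] [NormedSpace 𝕜 F] {f : 𝕜 → E × F} {f' : E × F} {x : 𝕜}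

theorem HasDerivAt.fst (h : HasDerivAt f f' x) : HasDerivAt (fun t => (f t).1) f'.1 x :=
  (ContinuousLinearMap.fst 𝕜 E F).hasFDerivAt.comp_hasDerivAt x h

theorem HasDerivAt.snd (h : HasDerivAt f f' x) : HasDerivAt (fun t => (f t).2) f'.2 x :=
  (ContinuousLinearMap.snd 𝕜 E F).hasFDerivAt.comp_hasDerivAt x h

end ComponentDerivatives

theorem norm_sq_add_norm_sq_eq_of_hasDerivAt {C₁ C₂ : ℝ → ℂ} {ω₁ ω₂ a b : ℝ}
    (h : ∀ t ∈ Icc a b, ∃ ρ : ℝ,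
      HasDerivAt C₁ (-(ω₁ * I) * C₁ t + ρ • C₂ t) t ∧
      HasDerivAt C₂ (-(ω₂ * I) * C₂ t - ρ • C₁ t) t) :
    ∀ t ∈ Icc a b, ‖C₁ t‖ ^ 2 + ‖C₂ t‖ ^ 2 = ‖C₁ a‖ ^ 2 + ‖C₂ a‖ ^ 2 := by
  refine constant_of_has_deriv_right_zero (fun t ht => ?_) (fun t ht => ?_)
  · obtain ⟨ρ, h₁, h₂⟩ := h t ht
    exact ((h₁.norm_sq.add h₂.norm_sq).continuousAt).continuousWithinAt
  · obtain ⟨ρ, h₁, h₂⟩ := h t (Ico_subset_Icc_self ht)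
    refine ((h₁.norm_sq.add h₂.norm_sq).congr_deriv ?_).hasDerivWithinAt
    -- the derivative is `2ρ · Re(C̄₁C₂ - C̄₂C₁) = 0`
    rw [Complex.inner, Complex.inner]
    simp [Complex.real_smul]
    ring

section ODE

variable {E : Type*} [NormedAddCommGroup E] [NormedSpace ℝ E]

theorem exists_hasDerivWithinAt_Icc_glue {v : ℝ → E → E} {f g : ℝ → E} {a b c : ℝ}
    (hac : a ≤ c) (hcb : c ≤ b) (hfg : f c = g c)
    (hf : ∀ t ∈ Icc a c, HasDerivWithinAt f (v t (f t)) (Icc a c) t)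
    (hg : ∀ t ∈ Icc c b, HasDerivWithinAt g (v t (g t)) (Icc c b) t) :
    ∃ G : ℝ → E, (∀ t ≤ c, G t = f t) ∧ (∀ t ≥ c, G t = g t) ∧
      ∀ t ∈ Icc a b, HasDerivWithinAt G (v t (G t)) (Icc a b) t := by
  classical
  set G : ℝ → E := fun t => if t ≤ c then f t else g t
  have hGf : ∀ t ≤ c, G t = f t := fun t ht => if_pos ht
  have hGg : ∀ t ≥ c, G t = g t := fun t ht => by
    rcases ht.eq_or_lt with rfl | ht
    · exact (hGf _ le_rfl).trans hfg
    · exact if_neg ht.not_ge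
  refine ⟨G, hGf, hGg, fun t ht => ?_⟩
  rw [← Icc_union_Icc_eq_Icc hac hcb]
  have hleft : t ≤ c → HasDerivWithinAt G (v t (G t)) (Icc a c) t := fun htc => by
    rw [hGf t htc]
    exact (hf t ⟨ht.1, htc⟩).congr (fun s hs => hGf s hs.2) (hGf t htc)
  have hright : c ≤ t → HasDerivWithinAt G (v t (G t)) (Icc c b) t := fun htc => by
    rw [hGg t htc]
    exact (hg t ⟨htc, ht.2⟩).congr (fun s hs => hGg s hs.1) (hGg t htc)
  rcases lt_trichotomy t c with htc | rfl | htc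
  · refine (hleft htc.le).union (HasFDerivWithinAt.of_notMem_closure ?_)
    rw [closure_Icc]; exact fun h => htc.not_ge h.1
  · exact (hleft le_rfl).union (hright le_rfl)
  · refine (HasFDerivWithinAt.of_notMem_closure ?_).union (hright htc.le)
    rw [closure_Icc]; exact fun h => htc.not_ge h.2

variable [CompleteSpace E] {v : ℝ → E → E} {K : ℝ≥0} {M : ℝ}

theorem exists_hasDerivWithinAt_Icc_of_lipschitzWith_of_sub_le
    (hlip : ∀ t, LipschitzWith K (v t)) (hcont : ∀ x, Continuous (v · x))
    (hM : ∀ t, ‖v t 0‖ ≤ M) {a b t₀ : ℝ} (ht₀ : t₀ ∈ Icc a b)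
    (hab : b - a ≤ (2 * (K : ℝ) + 2)⁻¹) (x₀ : E) :
    ∃ x : ℝ → E, x t₀ = x₀ ∧ ∀ t ∈ Icc a b, HasDerivWithinAt x (v t (x t)) (Icc a b) t := by
  have hM0 : 0 ≤ M := (norm_nonneg _).trans (hM 0)
  -- on the ball of radius `r` about `x₀` the field is bounded by `L ≤ (2K + 2) r`, so a step
  -- of length `(2K + 2)⁻¹` does not leave the ball
  let r : ℝ≥0 := ⟨‖x₀‖ + M + 1, by positivity⟩
  let L : ℝ≥0 := ⟨K * (2 * ‖x₀‖ + M + 1) + M, by positivity⟩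
  have hr : (r : ℝ) = ‖x₀‖ + M + 1 := rfl
  have hL : (L : ℝ) = K * (2 * ‖x₀‖ + M + 1) + M := rfl
  refine IsPicardLindelof.exists_eq_forall_mem_Icc_hasDerivWithinAt₀
    (t₀ := ⟨t₀, ht₀⟩) (x₀ := x₀) (a := r) (L := L) (K := K)
    ⟨fun t _ => (hlip t).lipschitzOnWith, fun x _ => (hcont x).continuousOn,
      fun t _ x hx => ?_, ?_⟩
  · have hx' : ‖x‖ ≤ 2 * ‖x₀‖ + M + 1 := by
      have := norm_le_norm_add_norm_sub' x x₀
      have := mem_closedBall_iff_norm.1 hx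
      rw [hr] at this
      linarith
    calc ‖v t x‖ ≤ ‖v t x - v t 0‖ + ‖v t 0‖ := norm_le_norm_sub_add _ _
      _ ≤ K * ‖x‖ + M := by
        gcongr
        · simpa [dist_eq_norm] using (hlip t).dist_le_mul x 0
        · exact hM t
      _ ≤ L := by rw [hL]; gcongr
  · have hmax : max (b - t₀) (t₀ - a) ≤ (2 * (K : ℝ) + 2)⁻¹ :=
      (max_le (by linarith [ht₀.1]) (by linarith [ht₀.2])).trans hab
    rw [hr, hL, NNReal.coe_zero, sub_zero]
    calc (K * (2 * ‖x₀‖ + M + 1) + M) * max (b - t₀) (t₀ - a)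
        ≤ (K * (2 * ‖x₀‖ + M + 1) + M) * (2 * (K : ℝ) + 2)⁻¹ := by gcongr
      _ ≤ ‖x₀‖ + M + 1 := by
        rw [← div_eq_mul_inv, div_le_iff₀ (by positivity)]
        nlinarith [norm_nonneg x₀, K.coe_nonneg]

theorem exists_hasDerivWithinAt_Icc_of_lipschitzWith
    (hlip : ∀ t, LipschitzWith K (v t)) (hcont : ∀ x, Continuous (v · x))
    (hM : ∀ t, ‖v t 0‖ ≤ M) {a b t₀ : ℝ} (ht₀ : t₀ ∈ Icc a b) (x₀ : E) :
    ∃ x : ℝ → E, x t₀ = x₀ ∧ ∀ t ∈ Icc a b, HasDerivWithinAt x (v t (x t)) (Icc a b) t := by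
  set h : ℝ := (2 * (K : ℝ) + 2)⁻¹
  have hh : 0 < h := by positivity
  suffices key : ∀ n : ℕ, ∀ a b t₀ : ℝ, t₀ ∈ Icc a b → b - a ≤ n * h → ∀ x₀ : E,
      ∃ x : ℝ → E, x t₀ = x₀ ∧ ∀ t ∈ Icc a b, HasDerivWithinAt x (v t (x t)) (Icc a b) t by
    obtain ⟨n, hn⟩ := exists_nat_ge ((b - a) / h)
    exact key n a b t₀ ht₀ ((div_le_iff₀ hh).1 hn) x₀
  intro n
  induction n with
  | zero =>
    intro a b t₀ ht₀ hab x₀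
    exact exists_hasDerivWithinAt_Icc_of_lipschitzWith_of_sub_le hlip hcont hM ht₀
      (by simp at hab; linarith) x₀
  | succ n ih =>
    intro a b t₀ ht₀ hab x₀
    by_cases hshort : b - a ≤ h
    · exact exists_hasDerivWithinAt_Icc_of_lipschitzWith_of_sub_le hlip hcont hM ht₀ hshort x₀
    set c := a + h
    have hac : a ≤ c := by linarith
    have hcb : c ≤ b := by linarith
    have hleft : c - a ≤ h := by simp [c]
    have hright : b - c ≤ n * h := by push_cast at hab; linarith
    rcases le_total t₀ c with htc | htc
    · obtain ⟨f, hf₀, hf⟩ := exists_hasDerivWithinAt_Icc_of_lipschitzWith_of_sub_le hlip hcont hM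
        ⟨ht₀.1, htc⟩ hleft x₀
      obtain ⟨g, hgc, hg⟩ := ih c b c ⟨le_rfl, hcb⟩ hright (f c)
      obtain ⟨G, hGf, -, hG⟩ := exists_hasDerivWithinAt_Icc_glue hac hcb hgc.symm hf hg
      exact ⟨G, (hGf t₀ htc).trans hf₀, hG⟩
    · obtain ⟨g, hg₀, hg⟩ := ih c b t₀ ⟨htc, ht₀.2⟩ hright x₀
      obtain ⟨f, hfc, hf⟩ := exists_hasDerivWithinAt_Icc_of_lipschitzWith_of_sub_le hlip hcont hM
        ⟨hac, le_rfl⟩ hleft (g c)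
      obtain ⟨G, -, hGg, hG⟩ := exists_hasDerivWithinAt_Icc_glue hac hcb hfc hf hg
      exact ⟨G, (hGg t₀ htc).trans hg₀, hG⟩

end ODE

section Patching

variable {E : Type*} [NormedAddCommGroup E] [NormedSpace ℝ E] {v : ℝ → E → E}

theorem exists_hasDerivAt_Ici_of_forall_Icc {x₀ : E}
    (hex : ∀ n : ℕ, ∃ x : ℝ → E, x 0 = x₀ ∧ ∀ t ∈ Icc 0 (n : ℝ), HasDerivAt x (v t (x t)) t)
    (huniq : ∀ (T : ℝ) (x y : ℝ → E), x 0 = x₀ → y 0 = x₀ →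
      (∀ t ∈ Icc 0 T, HasDerivAt x (v t (x t)) t) →
      (∀ t ∈ Icc 0 T, HasDerivAt y (v t (y t)) t) → EqOn x y (Icc 0 T)) :
    ∃ x : ℝ → E, x 0 = x₀ ∧ ∀ t ≥ 0, HasDerivAt x (v t (x t)) t := by
  choose sol hsol₀ hsol using hex
  have hagree : ∀ m n : ℕ, ∀ s ∈ Icc 0 (m : ℝ), s ≤ n → sol m s = sol n s :=
    fun m n s hs hsn => huniq s _ _ (hsol₀ m) (hsol₀ n)
      (fun t ht => hsol m t ⟨ht.1, ht.2.trans hs.2⟩)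
      (fun t ht => hsol n t ⟨ht.1, ht.2.trans hsn⟩) ⟨hs.1, le_rfl⟩
  have hceil : ∀ s : ℝ, s ≤ (⌈s⌉₊ + 1 : ℕ) := fun s => by
    push_cast; linarith [Nat.le_ceil s]
  refine ⟨fun t => sol (⌈t⌉₊ + 1) t, by simpa using hsol₀ 1, fun t ht => ?_⟩
  set n := ⌈t⌉₊ + 1
  have htn : t < n := by push_cast [n]; linarith [Nat.le_ceil t]
  -- at negative times the glued curve is `sol 1`, which is `sol n` when `t = 0`
  have heq : (fun s => sol (⌈s⌉₊ + 1) s) =ᶠ[𝓝 t] sol n := by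
    rcases ht.eq_or_lt with rfl | ht
    · filter_upwards [Iio_mem_nhds htn] with s hs
      rcases le_or_gt s 0 with hs₀ | hs₀
      · simp [n, Nat.ceil_eq_zero.2 hs₀]
      · exact hagree _ n s ⟨hs₀.le, hceil s⟩ hs.le
    · filter_upwards [Ioo_mem_nhds ht htn] with s hs
      exact hagree _ n s ⟨hs.1.le, hceil s⟩ hs.2.le
  exact (hsol n t ⟨ht, htn.le⟩).congr_of_eventuallyEq heq

end Patching

theorem ContinuousOn.exists_continuous_bounded_eqOn_Icc {f : ℝ → ℝ} (hf : ContinuousOn f (Ici 0))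
    {T : ℝ} (hT : 0 ≤ T) :
    ∃ g : ℝ → ℝ, Continuous g ∧ (∃ M : ℝ≥0, ∀ t, |g t| ≤ M) ∧ EqOn g f (Icc 0 T) := by
  have hproj : ∀ t, max 0 (min T t) ∈ Icc 0 T := fun t =>
    ⟨le_max_left _ _, max_le hT (min_le_left _ _)⟩
  obtain ⟨M, hM⟩ := isCompact_Icc.exists_bound_of_continuousOn (hf.mono Icc_subset_Ici_self)
  refine ⟨fun t => f (max 0 (min T t)), hf.comp_continuous (by fun_prop) fun t => (hproj t).1,
    ⟨M.toNNReal, fun t => (hM _ (hproj t)).trans M.le_coe_toNNReal⟩, fun t ht => ?_⟩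
  simp [min_eq_right ht.2, max_eq_right ht.1]

namespace MaxwellBloch

section Fields

variable (Ω σ c hbar ω₁ ω₂ q : ℝ)

/-- States `(A, B, C₁, C₂)` are points of `ℝ × ℝ × ℂ × ℂ`. -/
noncomputable def charge (x : ℝ × ℝ × ℂ × ℂ) : ℝ := ‖x.2.2.1‖ ^ 2 + ‖x.2.2.2‖ ^ 2

noncomputable def freeField : ℝ × ℝ × ℂ × ℂ →L[ℝ] ℝ × ℝ × ℂ × ℂ :=
  LinearMap.toContinuousLinearMap
    { toFun := fun x => (x.2.1, -Ω ^ 2 * x.1 - σ * x.2.1, -(ω₁ * I) * x.2.2.1, -(ω₂ * I) * x.2.2.2)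
      map_add' := fun x y => by ext <;> simp <;> ring
      map_smul' := fun r x => by ext <;> simp <;> ring }

theorem freeField_apply (x : ℝ × ℝ × ℂ × ℂ) :
    freeField Ω σ ω₁ ω₂ x =
      (x.2.1, -Ω ^ 2 * x.1 - σ * x.2.1, -(ω₁ * I) * x.2.2.1, -(ω₂ * I) * x.2.2.2) :=
  rfl

/-- `p` is the value of the pumping; the Bloch equations are solved for `C₁'`, `C₂'`, so the
coupling enters as `a / ℏ = q (A + p) / (c ℏ)`. -/
noncomputable def coupling (p : ℝ) (x : ℝ × ℝ × ℂ × ℂ) : ℝ × ℝ × ℂ × ℂ :=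
  (0, 2 * c * q * (starRingEnd ℂ x.2.2.1 * x.2.2.2).im,
    (q / c / hbar * (x.1 + p)) • x.2.2.2, -((q / c / hbar * (x.1 + p)) • x.2.2.1))

noncomputable def field (Ap : ℝ → ℝ) (t : ℝ) (x : ℝ × ℝ × ℂ × ℂ) : ℝ × ℝ × ℂ × ℂ :=
  freeField Ω σ ω₁ ω₂ x + coupling c hbar q (Ap t) x

/-- `‖x.2.2‖` is the sup norm of `(C₁, C₂)`, which is at most `1` on the charge sphere. -/
noncomputable def truncate (R : ℝ) (x : ℝ × ℝ × ℂ × ℂ) : ℝ × ℝ × ℂ × ℂ :=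
  (max (-R) (min R x.1), x.2.1, radialRetraction x.2.2)

noncomputable def truncField (R p : ℝ) (x : ℝ × ℝ × ℂ × ℂ) : ℝ × ℝ × ℂ × ℂ :=
  freeField Ω σ ω₁ ω₂ x + coupling c hbar q p (truncate R x)

theorem exists_lipschitzWith_truncField (R : ℝ) (M : ℝ≥0) :
    ∃ K, ∀ p : ℝ, |p| ≤ M → LipschitzWith K (truncField Ω σ c hbar ω₁ ω₂ q R p) := by
  set g : ℝ × ℝ × ℂ × ℂ → ℂ × ℂ := fun x => radialRetraction x.2.2
  have hg : LipschitzWith (2 * (1 * 1)) g :=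
    lipschitzWith_radialRetraction.comp (LipschitzWith.prod_snd.comp LipschitzWith.prod_snd)
  have hg₁ := LipschitzWith.prod_fst.comp hg
  have hg₂ := LipschitzWith.prod_snd.comp hg
  have hg₁M : ∀ x, ‖(g x).1‖ ≤ (1 : ℝ≥0) := fun x =>
    (norm_fst_le _).trans (norm_radialRetraction_le_one _)
  have hg₂M : ∀ x, ‖(g x).2‖ ≤ (1 : ℝ≥0) := fun x =>
    (norm_snd_le _).trans (norm_radialRetraction_le_one _)
  have him : LipschitzWith 1 Complex.im := LipschitzWith.of_dist_le_mul fun z w => by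
    simpa [Complex.dist_eq, Real.dist_eq] using abs_im_le_norm (z - w)
  have hcurrent := (lipschitzWith_smul (2 * c * q)).comp <| him.comp <|
    (Complex.isometry_conj.lipschitz.comp hg₁).smul_of_norm_le hg₂
      (fun x => (Complex.norm_conj _).trans_le (hg₁M x)) hg₂M
  have hclip : LipschitzWith 1 fun x : ℝ × ℝ × ℂ × ℂ => (truncate R x).1 :=
    (LipschitzWith.prod_fst.const_min R).const_max (-R)
  have ha (p : ℝ) := (lipschitzWith_smul (q / c / hbar)).comp (hclip.add (LipschitzWith.const p))
  have haM (p : ℝ) (hp : |p| ≤ M) (x : ℝ × ℝ × ℂ × ℂ) :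
      ‖q / c / hbar * ((truncate R x).1 + p)‖ ≤ (‖q / c / hbar‖₊ * (‖R‖₊ + M) : ℝ≥0) := by
    push_cast
    rw [norm_mul, Real.norm_eq_abs (_ + _)]
    gcongr
    refine (abs_add_le _ _).trans (add_le_add ?_ hp)
    simp only [truncate, abs_le]
    exact ⟨le_max_of_le_left (neg_le_neg (le_abs_self R)),
      max_le (neg_le_abs R) ((min_le_left _ _).trans (le_abs_self R))⟩
  exact ⟨_, fun p hp => (freeField Ω σ ω₁ ω₂).lipschitz.add <|
    (LipschitzWith.const 0).prodMk <| hcurrent.prodMk <|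
      ((ha p).smul_of_norm_le hg₂ (haM p hp) hg₂M).prodMk
        ((ha p).smul_of_norm_le hg₁ (haM p hp) hg₁M).neg⟩

theorem continuous_truncField_apply (R : ℝ) (x : ℝ × ℝ × ℂ × ℂ) :
    Continuous fun p => truncField Ω σ c hbar ω₁ ω₂ q R p x := by
  unfold truncField coupling
  fun_prop

end Fields

variable {Ω σ c hbar ω₁ ω₂ q : ℝ} {Ap : ℝ → ℝ}

theorem norm_snd_snd_le_one_of_charge_eq_one {x : ℝ × ℝ × ℂ × ℂ} (hx : charge x = 1) :
    ‖x.2.2‖ ≤ 1 := by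
  unfold charge at hx
  refine max_le ?_ ?_ <;> nlinarith [norm_nonneg x.2.2.1, norm_nonneg x.2.2.2]

theorem truncate_of_abs_le {R : ℝ} {x : ℝ × ℝ × ℂ × ℂ} (hA : |x.1| ≤ R) (hC : ‖x.2.2‖ ≤ 1) :
    truncate R x = x := by
  rw [abs_le] at hA
  simp [truncate, radialRetraction_of_norm_le_one hC, min_eq_right hA.2, max_eq_right hA.1]

theorem field_eq_truncField {P : ℝ → ℝ} {t R : ℝ} (hP : P t = Ap t) {x : ℝ × ℝ × ℂ × ℂ}
    (hA : |x.1| ≤ R) (hC : ‖x.2.2‖ ≤ 1) :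
    field Ω σ c hbar ω₁ ω₂ q Ap t x = truncField Ω σ c hbar ω₁ ω₂ q R (P t) x := by
  rw [truncField, truncate_of_abs_le hA hC, hP, field]

theorem abs_truncate_fst_le {R : ℝ} (hR : 0 ≤ R) (x : ℝ × ℝ × ℂ × ℂ) :
    |(truncate R x).1| ≤ |x.1| := by
  simp only [truncate, abs_le]
  constructor
  · exact le_max_of_le_right (le_min (by linarith [abs_nonneg x.1]) (neg_abs_le x.1))
  · exact max_le (by linarith [abs_nonneg x.1]) ((min_le_right _ _).trans (le_abs_self _))

theorem norm_coupling_le (p : ℝ) {x : ℝ × ℝ × ℂ × ℂ} (hC : ‖x.2.2‖ ≤ 1) :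
    ‖coupling c hbar q p x‖ ≤ |2 * c * q| + |q / c / hbar| * (|x.1| + |p|) := by
  have h₁ : ‖x.2.2.1‖ ≤ 1 := (norm_fst_le _).trans hC
  have h₂ : ‖x.2.2.2‖ ≤ 1 := (norm_snd_le _).trans hC
  have hcurrent : |2 * c * q * (starRingEnd ℂ x.2.2.1 * x.2.2.2).im| ≤ |2 * c * q| := by
    rw [abs_mul]
    refine mul_le_of_le_one_right (abs_nonneg _) ((abs_im_le_norm _).trans ?_)
    rw [norm_mul, norm_conj]
    exact mul_le_one₀ h₁ (norm_nonneg _) h₂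
  have hcoeff : ∀ z : ℂ, ‖z‖ ≤ 1 →
      |q / c / hbar * (x.1 + p)| * ‖z‖ ≤ |q / c / hbar| * (|x.1| + |p|) := fun z hz => by
    rw [abs_mul]
    exact (mul_le_of_le_one_right (by positivity) hz).trans
      (mul_le_mul_of_nonneg_left (abs_add_le _ _) (abs_nonneg _))
  simp only [coupling, norm_prod_le_iff, norm_zero, norm_neg, norm_smul, Real.norm_eq_abs]
  refine ⟨by positivity, hcurrent.trans (le_add_of_nonneg_right (by positivity)),
    (hcoeff _ h₂).trans ?_, (hcoeff _ h₁).trans ?_⟩ <;>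
  exact le_add_of_nonneg_left (abs_nonneg _)

theorem norm_truncField_le {R : ℝ} (hR : 0 ≤ R) (p : ℝ) (x : ℝ × ℝ × ℂ × ℂ) :
    ‖truncField Ω σ c hbar ω₁ ω₂ q R p x‖ ≤
      (‖freeField Ω σ ω₁ ω₂‖ + |q / c / hbar|) * ‖x‖ + (|2 * c * q| + |q / c / hbar| * |p|) := by
  have hA : |(truncate R x).1| ≤ ‖x‖ := (abs_truncate_fst_le hR x).trans (norm_fst_le x)
  calc ‖truncField Ω σ c hbar ω₁ ω₂ q R p x‖
      ≤ ‖freeField Ω σ ω₁ ω₂‖ * ‖x‖ + (|2 * c * q| + |q / c / hbar| * (‖x‖ + |p|)) :=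
        (norm_add_le _ _).trans <| add_le_add ((freeField Ω σ ω₁ ω₂).le_opNorm x) <|
          (norm_coupling_le p (norm_radialRetraction_le_one _)).trans (by gcongr)
    _ = _ := by ring

/-- Covers both `field` (`z = x t`) and `truncField` (`z = truncate R (x t)`). -/
theorem charge_eq_of_hasDerivAt {x : ℝ → ℝ × ℝ × ℂ × ℂ} {a b : ℝ}
    (hx : ∀ t ∈ Icc a b, ∃ (p s : ℝ) (z : ℝ × ℝ × ℂ × ℂ), z.2.2 = s • (x t).2.2 ∧
      HasDerivAt x (freeField Ω σ ω₁ ω₂ (x t) + coupling c hbar q p z) t) :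
    ∀ t ∈ Icc a b, charge (x t) = charge (x a) := by
  refine norm_sq_add_norm_sq_eq_of_hasDerivAt (ω₁ := ω₁) (ω₂ := ω₂) fun t ht => ?_
  obtain ⟨p, s, z, hz, hd⟩ := hx t ht
  have hz₁ : z.2.2.1 = s • (x t).2.2.1 := congrArg Prod.fst hz
  have hz₂ : z.2.2.2 = s • (x t).2.2.2 := congrArg Prod.snd hz
  refine ⟨q / c / hbar * (z.1 + p) * s, hd.snd.snd.fst.congr_deriv ?_,
    hd.snd.snd.snd.congr_deriv ?_⟩
  · simp [freeField_apply, coupling, hz₂]; ring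
  · simp [freeField_apply, coupling, hz₁]; ring

theorem charge_eq_one_of_hasDerivAt_field {x : ℝ → ℝ × ℝ × ℂ × ℂ} {T : ℝ}
    (hx : ∀ t ∈ Icc 0 T, HasDerivAt x (field Ω σ c hbar ω₁ ω₂ q Ap t (x t)) t)
    (h₀ : charge (x 0) = 1) : ∀ t ∈ Icc 0 T, charge (x t) = 1 := fun t ht =>
  h₀ ▸ charge_eq_of_hasDerivAt (fun t ht => ⟨Ap t, 1, x t, (one_smul _ _).symm, hx t ht⟩) t ht

theorem exists_hasDerivAt_field (hAp : ContinuousOn Ap (Ici 0)) {x₀ : ℝ × ℝ × ℂ × ℂ}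
    (hx₀ : charge x₀ = 1) {T : ℝ} (hT : 0 ≤ T) :
    ∃ x : ℝ → ℝ × ℝ × ℂ × ℂ, x 0 = x₀ ∧
      ∀ t ∈ Icc 0 T, HasDerivAt x (field Ω σ c hbar ω₁ ω₂ q Ap t (x t)) t := by
  obtain ⟨P, hPc, ⟨M, hM⟩, hPAp⟩ := hAp.exists_continuous_bounded_eqOn_Icc hT
  set K₀ := ‖freeField Ω σ ω₁ ω₂‖ + |q / c / hbar|
  set ε := |2 * c * q| + |q / c / hbar| * M with hε
  -- the growth bound of `truncField R` does not depend on `R`, so `R` can be its Grönwall bound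
  set R := gronwallBound ‖x₀‖ K₀ ε T
  have hR : 0 ≤ R := by
    have := gronwallBound_mono (norm_nonneg x₀) (by positivity : 0 ≤ ε)
      (by positivity : 0 ≤ K₀) hT
    rw [gronwallBound_x0] at this
    exact (norm_nonneg _).trans this
  have hgrowth : ∀ t y, ‖truncField Ω σ c hbar ω₁ ω₂ q R (P t) y‖ ≤ K₀ * ‖y‖ + ε := fun t y =>
    (norm_truncField_le hR _ y).trans (by rw [hε]; gcongr; exact hM t)
  obtain ⟨K, hK⟩ := exists_lipschitzWith_truncField Ω σ c hbar ω₁ ω₂ q R M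
  obtain ⟨x, hx₀', hx⟩ := exists_hasDerivWithinAt_Icc_of_lipschitzWith
    (v := fun t => truncField Ω σ c hbar ω₁ ω₂ q R (P t)) (fun t => hK _ (hM t))
    (fun y => (continuous_truncField_apply Ω σ c hbar ω₁ ω₂ q R y).comp hPc)
    (fun t => by simpa using hgrowth t 0)
    (⟨by norm_num, by linarith⟩ : (0 : ℝ) ∈ Icc (-1) (T + 1)) x₀
  have hxd : ∀ t ∈ Icc 0 T, HasDerivAt x (truncField Ω σ c hbar ω₁ ω₂ q R (P t) (x t)) t :=
    fun t ht => (hx t ⟨by linarith [ht.1], by linarith [ht.2]⟩).hasDerivAt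
      (Icc_mem_nhds (by linarith [ht.1]) (by linarith [ht.2]))
  have hcharge : ∀ t ∈ Icc 0 T, charge (x t) = 1 := fun t ht =>
    (hx₀' ▸ hx₀) ▸ charge_eq_of_hasDerivAt
      (fun t ht => ⟨P t, _, truncate R (x t), rfl, hxd t ht⟩) t ht
  have hnorm : ∀ t ∈ Icc 0 T, ‖x t‖ ≤ R := fun t ht =>
    (norm_le_gronwallBound_of_norm_deriv_right_le
      (fun t ht => (hxd t ht).continuousAt.continuousWithinAt)
      (fun t ht => (hxd t (Ico_subset_Icc_self ht)).hasDerivWithinAt) (hx₀' ▸ le_rfl)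
      (fun t _ => hgrowth t (x t)) t ht).trans
    (gronwallBound_mono (norm_nonneg _) (by positivity) (by positivity) (by linarith [ht.2]))
  refine ⟨x, hx₀', fun t ht => ?_⟩
  rw [field_eq_truncField (hPAp ht) ((norm_fst_le _).trans (hnorm t ht))
    (norm_snd_snd_le_one_of_charge_eq_one (hcharge t ht))]
  exact hxd t ht

theorem hasDerivAt_truncField_of_field {P : ℝ → ℝ} {T R : ℝ} (hP : EqOn P Ap (Icc 0 T))
    {x : ℝ → ℝ × ℝ × ℂ × ℂ}
    (hx : ∀ t ∈ Icc 0 T, HasDerivAt x (field Ω σ c hbar ω₁ ω₂ q Ap t (x t)) t)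
    (hx₀ : charge (x 0) = 1) (hR : ∀ t ∈ Icc 0 T, ‖x t‖ ≤ R) :
    ∀ t ∈ Icc 0 T, HasDerivAt x (truncField Ω σ c hbar ω₁ ω₂ q R (P t) (x t)) t := fun t ht => by
  rw [← field_eq_truncField (hP ht) ((norm_fst_le _).trans (hR t ht))
    (norm_snd_snd_le_one_of_charge_eq_one (charge_eq_one_of_hasDerivAt_field hx hx₀ t ht))]
  exact hx t ht

theorem eqOn_of_hasDerivAt_field (hAp : ContinuousOn Ap (Ici 0)) {x y : ℝ → ℝ × ℝ × ℂ × ℂ}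
    {T : ℝ} (hx : ∀ t ∈ Icc 0 T, HasDerivAt x (field Ω σ c hbar ω₁ ω₂ q Ap t (x t)) t)
    (hy : ∀ t ∈ Icc 0 T, HasDerivAt y (field Ω σ c hbar ω₁ ω₂ q Ap t (y t)) t)
    (hxy : x 0 = y 0) (hx₀ : charge (x 0) = 1) : EqOn x y (Icc 0 T) := by
  rcases lt_or_ge T 0 with hT | hT
  · simp [Icc_eq_empty_of_lt hT]
  obtain ⟨P, -, ⟨M, hM⟩, hPAp⟩ := hAp.exists_continuous_bounded_eqOn_Icc hT
  have hxc : ContinuousOn x (Icc 0 T) := fun t ht => (hx t ht).continuousAt.continuousWithinAt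
  have hyc : ContinuousOn y (Icc 0 T) := fun t ht => (hy t ht).continuousAt.continuousWithinAt
  obtain ⟨Rx, hRx⟩ := isCompact_Icc.exists_bound_of_continuousOn hxc
  obtain ⟨Ry, hRy⟩ := isCompact_Icc.exists_bound_of_continuousOn hyc
  obtain ⟨K, hK⟩ := exists_lipschitzWith_truncField Ω σ c hbar ω₁ ω₂ q (max Rx Ry) M
  have htrunc {z : ℝ → ℝ × ℝ × ℂ × ℂ}
      (hz : ∀ t ∈ Icc 0 T, HasDerivAt z (field Ω σ c hbar ω₁ ω₂ q Ap t (z t)) t)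
      (hz₀ : charge (z 0) = 1) (hzR : ∀ t ∈ Icc 0 T, ‖z t‖ ≤ max Rx Ry) (t : ℝ)
      (ht : t ∈ Ico 0 T) :
      HasDerivWithinAt z (truncField Ω σ c hbar ω₁ ω₂ q (max Rx Ry) (P t) (z t)) (Ici t) t :=
    (hasDerivAt_truncField_of_field hPAp hz hz₀ hzR t (Ico_subset_Icc_self ht)).hasDerivWithinAt
  exact ODE_solution_unique_of_mem_Icc_right (s := fun _ => univ)
    (fun t _ => (hK _ (hM t)).lipschitzOnWith) hxc
    (htrunc hx hx₀ fun t ht => (hRx t ht).trans (le_max_left _ _)) (fun _ _ => mem_univ _) hyc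
    (htrunc hy (hxy ▸ hx₀) fun t ht => (hRy t ht).trans (le_max_right _ _))
    (fun _ _ => mem_univ _) hxy

theorem I_mul_mul_eq_iff (hbar0 : hbar ≠ 0) (ω a : ℝ) (d z w : ℂ) :
    I * hbar * d = hbar * ω * z + I * a * w ↔ d = -(ω * I) * z + (a / hbar) • w := by
  have hh : (hbar : ℂ) ≠ 0 := ofReal_ne_zero.2 hbar0
  have hI : I * (hbar : ℂ) ≠ 0 := mul_ne_zero I_ne_zero hh
  have hsolved : I * hbar * (-(ω * I) * z + (a / hbar) • w) = hbar * ω * z + I * a * w := by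
    rw [real_smul]
    push_cast
    field_simp
    linear_combination (-(hbar * ω * z)) * I_sq
  rw [← mul_right_inj' hI (b := d), hsolved]

theorem isMBSolution_iff (hbar0 : hbar ≠ 0) {A B : ℝ → ℝ} {C₁ C₂ : ℝ → ℂ} :
    IsMBSolution Ω σ c hbar ω₁ ω₂ q Ap A B C₁ C₂ ↔ ∀ t ∈ Ici (0 : ℝ),
      HasDerivAt (fun t => (A t, B t, C₁ t, C₂ t))
        (field Ω σ c hbar ω₁ ω₂ q Ap t (A t, B t, C₁ t, C₂ t)) t := by
  have hfield : ∀ t, field Ω σ c hbar ω₁ ω₂ q Ap t (A t, B t, C₁ t, C₂ t) =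
      (B t, -Ω ^ 2 * A t - σ * B t + c * mbCurrent q C₁ C₂ t,
        -(ω₁ * I) * C₁ t + (q / c * (A t + Ap t) / hbar) • C₂ t,
        -(ω₂ * I) * C₂ t + (-(q / c * (A t + Ap t)) / hbar) • C₁ t) := fun t => by
    simp only [field, freeField_apply, coupling, mbCurrent, Prod.mk_add_mk, add_zero,
      ← neg_smul]
    congr 3
    · ring
    all_goals congr 2; ring
  have hC₁ : ∀ t d,
      I * hbar * d = hbar * ω₁ * C₁ t + I * ((q / c * (A t + Ap t) : ℝ) : ℂ) * C₂ t ↔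
      d = -(ω₁ * I) * C₁ t + (q / c * (A t + Ap t) / hbar) • C₂ t := fun t d =>
    I_mul_mul_eq_iff hbar0 _ _ _ _ _
  have hC₂ : ∀ t d,
      I * hbar * d = hbar * ω₂ * C₂ t - I * ((q / c * (A t + Ap t) : ℝ) : ℂ) * C₁ t ↔
      d = -(ω₂ * I) * C₂ t + (-(q / c * (A t + Ap t)) / hbar) • C₁ t := fun t d => by
    rw [← I_mul_mul_eq_iff hbar0, ofReal_neg, sub_eq_add_neg, mul_neg, neg_mul]
  simp only [hfield]
  constructor
  · rintro ⟨hA, hB, hC₁', hC₂'⟩ t ht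
    obtain ⟨d₁, hd₁, he₁⟩ := hC₁' t ht
    obtain ⟨d₂, hd₂, he₂⟩ := hC₂' t ht
    rw [hC₁] at he₁
    rw [hC₂] at he₂
    subst he₁ he₂
    exact (hA t ht).prodMk ((hB t ht).prodMk (hd₁.prodMk hd₂))
  · intro h
    exact ⟨fun t ht => (h t ht).fst, fun t ht => (h t ht).snd.fst,
      fun t ht => ⟨_, (h t ht).snd.snd.fst, (hC₁ t _).2 rfl⟩,
      fun t ht => ⟨_, (h t ht).snd.snd.snd, (hC₂ t _).2 rfl⟩⟩

end MaxwellBloch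

open MaxwellBloch

theorem mb_wellposedness_general
    (Ω σ c hbar ω₁ ω₂ q : ℝ) (Ap : ℝ → ℝ)
    (hhbar : 0 < hbar)
    (hAp : ContinuousOn Ap (Set.Ici 0))
    (A0 B0 : ℝ) (C10 C20 : ℂ) (hinit : ‖C10‖ ^ 2 + ‖C20‖ ^ 2 = 1) :
    ∃ (A B : ℝ → ℝ) (C₁ C₂ : ℝ → ℂ),
      IsMBSolution Ω σ c hbar ω₁ ω₂ q Ap A B C₁ C₂ ∧
      A 0 = A0 ∧ B 0 = B0 ∧ C₁ 0 = C10 ∧ C₂ 0 = C20 ∧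
      (∀ t ≥ (0 : ℝ), ‖C₁ t‖ ^ 2 + ‖C₂ t‖ ^ 2 = 1) ∧
      (∀ (A' B' : ℝ → ℝ) (C₁' C₂' : ℝ → ℂ),
        IsMBSolution Ω σ c hbar ω₁ ω₂ q Ap A' B' C₁' C₂' →
        A' 0 = A0 → B' 0 = B0 → C₁' 0 = C10 → C₂' 0 = C20 →
        ∀ t ≥ (0 : ℝ), A' t = A t ∧ B' t = B t ∧ C₁' t = C₁ t ∧ C₂' t = C₂ t) := by
  have hx₀ : charge (A0, B0, C10, C20) = 1 := hinit
  obtain ⟨X, hX₀, hX⟩ := exists_hasDerivAt_Ici_of_forall_Icc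
    (fun n => exists_hasDerivAt_field hAp hx₀ n.cast_nonneg)
    fun T x y hx hy hxd hyd => eqOn_of_hasDerivAt_field hAp hxd hyd (hx.trans hy.symm) (hx ▸ hx₀)
  refine ⟨fun t => (X t).1, fun t => (X t).2.1, fun t => (X t).2.2.1, fun t => (X t).2.2.2,
    (isMBSolution_iff hhbar.ne').2 hX, by simp [hX₀], by simp [hX₀], by simp [hX₀], by simp [hX₀],
    fun t ht => charge_eq_one_of_hasDerivAt_field (fun s hs => hX s hs.1) (hX₀ ▸ hx₀) t
      ⟨ht, le_rfl⟩,
    fun A' B' C₁' C₂' hsol hA hB hC₁ hC₂ t ht => ?_⟩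
  have hY₀ : (A' 0, B' 0, C₁' 0, C₂' 0) = X 0 := by rw [hA, hB, hC₁, hC₂, hX₀]
  simpa [Prod.ext_iff] using eqOn_of_hasDerivAt_field hAp
    (fun s hs => (isMBSolution_iff hhbar.ne').1 hsol s hs.1) (fun s hs => hX s hs.1) hY₀
    (hY₀ ▸ hX₀ ▸ hx₀) ⟨ht, le_rfl⟩

/-- Global well-posedness of the Maxwell–Bloch system: existence and uniqueness
of a global solution on `[0,∞)` for each initial state on the charge sphere,
and the solution stays on the charge sphere. -/
theorem mb_wellposedness
    (Ω σ c hbar ω₁ ω₂ q : ℝ) (Ap : ℝ → ℝ)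
    (hΩ : 0 < Ω) (hσ : 0 < σ) (hc : 0 < c) (hhbar : 0 < hbar)
    (hω : ω₁ < ω₂) (hq : 0 < q) (hAp : ContinuousOn Ap (Set.Ici 0))
    (A0 B0 : ℝ) (C10 C20 : ℂ) (hinit : ‖C10‖ ^ 2 + ‖C20‖ ^ 2 = 1) :
    ∃ (A B : ℝ → ℝ) (C₁ C₂ : ℝ → ℂ),
      IsMBSolution Ω σ c hbar ω₁ ω₂ q Ap A B C₁ C₂ ∧
      A 0 = A0 ∧ B 0 = B0 ∧ C₁ 0 = C10 ∧ C₂ 0 = C20 ∧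
      (∀ t ≥ (0 : ℝ), ‖C₁ t‖ ^ 2 + ‖C₂ t‖ ^ 2 = 1) ∧
      (∀ (A' B' : ℝ → ℝ) (C₁' C₂' : ℝ → ℂ),
        IsMBSolution Ω σ c hbar ω₁ ω₂ q Ap A' B' C₁' C₂' →
        A' 0 = A0 → B' 0 = B0 → C₁' 0 = C10 → C₂' 0 = C20 →
        ∀ t ≥ (0 : ℝ), A' t = A t ∧ B' t = B t ∧ C₁' t = C₁ t ∧ C₂' t = C₂ t) :=
  mb_wellposedness_general Ω σ c hbar ω₁ ω₂ q Ap hhbar hAp A0 B0 C10 C20 hinit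
end
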